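/- Let k be an integer with 3 ≤ k ≤ 7. Suppose that for all coprime odd integers a, d, the arithmetic progression a, a+d, ..., a+(2k−1)d (with 2k terms) contains a term relatively prime to all the others. Then for all coprime odd integers a, d, the arithmetic progression a, a+d, ..., a+2k·d (with 2k+1 terms) also contains a term relatively prime to all the others. -/

import Mathlib

/-!
Take the index `i` given by the hypothesis for the first `2k` terms. For odd `a` and `d` the
term `a + j d` is even exactly when `j` is odd, and there are two odd indices below `2k`, so `i`
is even and the term `a + i d` is odd. A prime `p` dividing it and the last term `a + 2k d`
cannot divide `d`, so it divides `2k - i`; being odd while `2k - i` is even, `2p ≤ 2k - i`.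
Hence `i + p` is an index below `2k` whose term `a + i d + p d` is also divisible by `p`,
a contradiction.
-/

theorem Prime.dvd_sub_of_dvd_add_mul {R : Type*} [CommRing R] {p a d i j : R} (hp : Prime p)
    (had : IsCoprime a d) (hi : p ∣ a + i * d) (hj : p ∣ a + j * d) : p ∣ j - i := by
  have hpd : ¬ p ∣ d := fun hpd =>
    hp.not_isUnit (had.isUnit_of_dvd' (by simpa using dvd_sub hi (hpd.mul_left i)) hpd)
  have hdiff : p ∣ (j - i) * d := by
    convert dvd_sub hj hi using 1
    ring
  exact (hp.dvd_or_dvd hdiff).resolve_right hpd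

theorem Int.gcd_ne_one_of_prime_dvd {x y : ℤ} {p : ℕ} (hp : p.Prime) (hx : (p : ℤ) ∣ x)
    (hy : (p : ℤ) ∣ y) : Int.gcd x y ≠ 1 := fun h =>
  hp.one_lt.ne' <| by
    exact_mod_cast Int.eq_one_of_dvd_one (by positivity) (Int.gcd_eq_one_iff.1 h _ hx hy)

theorem Int.odd_add_mul_iff {a d j : ℤ} (ha : Odd a) (hd : Odd d) :
    Odd (a + j * d) ↔ Even j := by
  simp [Int.odd_add, ha, hd, parity_simps]

section OddProgression

variable {a d : ℤ} {n i : ℕ}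

theorem even_of_forall_gcd_add_mul_eq_one (ha : Odd a) (hd : Odd d) (hn : 4 ≤ n)
    (hcop : ∀ j < n, j ≠ i → Int.gcd (a + i * d) (a + j * d) = 1) : Even i := by
  by_contra hi
  obtain ⟨j, hj_odd, hjn, hji⟩ : ∃ j, Odd j ∧ j < n ∧ j ≠ i := by
    by_cases h : i = 1
    · exact ⟨3, by decide, by omega, by omega⟩
    · exact ⟨1, odd_one, by omega, Ne.symm h⟩
  have h_even : ∀ {m : ℕ}, ¬ Even m → (2 : ℤ) ∣ a + m * d := fun hm =>
    even_iff_two_dvd.1 <| Int.not_odd_iff_even.1 <| by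
      rwa [Int.odd_add_mul_iff ha hd, Int.even_coe_nat]
  exact Int.gcd_ne_one_of_prime_dvd Nat.prime_two (h_even hi)
    (h_even (Nat.not_even_iff_odd.2 hj_odd)) (hcop j hjn hji)

theorem gcd_add_mul_eq_one_of_even_sub (had : IsCoprime a d) (hti : Odd (a + i * d))
    (hin : i < n) (heven : Even (n - i))
    (hcop : ∀ j < n, j ≠ i → Int.gcd (a + i * d) (a + j * d) = 1) :
    Int.gcd (a + i * d) (a + n * d) = 1 := by
  by_contra hne
  rw [Int.gcd_eq_natAbs_gcd_natAbs] at hne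
  obtain ⟨p, hp, hpi, hpn⟩ := Nat.Prime.not_coprime_iff_dvd.1 hne
  rw [← Int.natCast_dvd] at hpi hpn
  have hp2 : p ≠ 2 := by
    rintro rfl
    exact Int.not_even_iff_odd.2 hti (even_iff_two_dvd.2 hpi)
  have hp_sub : p ∣ n - i := by
    have h := (Nat.prime_iff_prime_int.1 hp).dvd_sub_of_dvd_add_mul had hpi hpn
    rwa [← Nat.cast_sub hin.le, Int.natCast_dvd_natCast] at h
  have h2p : 2 * p ∣ n - i :=
    ((Nat.coprime_primes Nat.prime_two hp).2 hp2.symm).mul_dvd_of_dvd_of_dvd heven.two_dvd hp_sub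
  have hlt : i + p < n := by
    have := Nat.le_of_dvd (by omega) h2p
    have := hp.two_le
    omega
  have hpip : (p : ℤ) ∣ a + ((i + p : ℕ) : ℤ) * d := by
    rw [Nat.cast_add, add_mul, ← add_assoc]
    exact dvd_add hpi (dvd_mul_right _ _)
  exact Int.gcd_ne_one_of_prime_dvd hp hpi hpip (hcop (i + p) hlt (by have := hp.pos; omega))

end OddProgression

theorem pillai_step_odd_odd_general (k : ℕ) (hk3 : 3 ≤ k)
    (H : ∀ a d : ℤ, Int.gcd a d = 1 → Odd a → Odd d →
      ∃ i < 2 * k, ∀ j < 2 * k, j ≠ i →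
        Int.gcd (a + (i : ℤ) * d) (a + (j : ℤ) * d) = 1) :
    ∀ a d : ℤ, Int.gcd a d = 1 → Odd a → Odd d →
      ∃ i < 2 * k + 1, ∀ j < 2 * k + 1, j ≠ i →
        Int.gcd (a + (i : ℤ) * d) (a + (j : ℤ) * d) = 1 := by
  intro a d hgcd ha hd
  obtain ⟨i, hi, hcop⟩ := H a d hgcd ha hd
  have hi_even : Even i := even_of_forall_gcd_add_mul_eq_one ha hd (by omega) hcop
  have hti : Odd (a + i * d) := (Int.odd_add_mul_iff ha hd).2 (by exact_mod_cast hi_even)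
  refine ⟨i, by omega, fun j hj hji => ?_⟩
  obtain hj | rfl : j < 2 * k ∨ j = 2 * k := by omega
  · exact hcop j hj hji
  · exact gcd_add_mul_eq_one_of_even_sub (Int.isCoprime_iff_gcd_eq_one.2 hgcd) hti hi
      ((Nat.even_sub hi.le).2 (iff_of_true (even_two_mul k) hi_even)) hcop

/-- If the Generalized Pillai Theorem holds for progressions of `2k` terms with both
the first term and the common difference odd (`3 ≤ k ≤ 7`), then it holds for such
progressions of `2k+1` terms. -/
theorem pillai_step_odd_odd (k : ℕ) (hk3 : 3 ≤ k) (hk7 : k ≤ 7)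
    (H : ∀ a d : ℤ, Int.gcd a d = 1 → Odd a → Odd d →
      ∃ i < 2 * k, ∀ j < 2 * k, j ≠ i →
        Int.gcd (a + (i : ℤ) * d) (a + (j : ℤ) * d) = 1) :
    ∀ a d : ℤ, Int.gcd a d = 1 → Odd a → Odd d →
      ∃ i < 2 * k + 1, ∀ j < 2 * k + 1, j ≠ i →
        Int.gcd (a + (i : ℤ) * d) (a + (j : ℤ) * d) = 1 :=
  pillai_step_odd_odd_general k hk3 H
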